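/- Let A be a commutative ℚ-algebra with derivation d, let N ≥ 1 and k ≥ 1, and let z̄ ∈ A[w,w⁻¹] have support contained in {−1, 0, …, N}. Set H̄_k := (z̄^k)₋ + (1/2)·(z̄^k)₀. Then {H̄_k, z̄} has support contained in {−1, …, N}; i.e., the t̄_k-flows preserve the polynomial reduction of z̄. -/

import Mathlib

open LaurentPolynomial

/-- The derivation `d : A → A` extended coefficientwise to Laurent polynomials
(so that `d w = 0`). -/
noncomputable def dmap {A : Type*} [CommRing A] (d : A → A) (f : LaurentPolynomial A) :
    LaurentPolynomial A :=
  f.coeff.sum fun n a => C (d a) * T n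

/-- The formal derivative `∂_w` on Laurent polynomials. -/
noncomputable def wderiv {A : Type*} [CommRing A] (f : LaurentPolynomial A) :
    LaurentPolynomial A :=
  f.coeff.sum fun n a => C (n • a) * T (n - 1)

/-- The Lax–Poisson bracket `{f,g} = w·(∂_w f)·(d g) − w·(d f)·(∂_w g)`. -/
noncomputable def lax {A : Type*} [CommRing A] (d : A → A) (f g : LaurentPolynomial A) :
    LaurentPolynomial A :=
  T 1 * wderiv f * dmap d g - T 1 * dmap d f * wderiv g

/-- `f₊`, the strictly positive-degree part of a Laurent polynomial. -/
noncomputable def posPart {A : Type*} [CommRing A] (f : LaurentPolynomial A) :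
    LaurentPolynomial A :=
  f.coeff.sum fun n a => if 0 < n then C a * T n else 0

/-- `f₋`, the strictly negative-degree part of a Laurent polynomial. -/
noncomputable def negPart {A : Type*} [CommRing A] (f : LaurentPolynomial A) :
    LaurentPolynomial A :=
  f.coeff.sum fun n a => if n < 0 then C a * T n else 0

/-! The bracket is a biderivation, so `{z̄^k, z̄} = k z̄^(k-1) {z̄, z̄} = 0`. Write `z̄^k = H̄_k + Q`
with `H̄_k` supported in `[-k, 0]` and `Q` in `[0, kN]`. Since `{f, g}` is supported in
`supp f + supp g`, the bracket `{H̄_k, z̄}` lies in `[-k-1, N]`, while `{H̄_k, z̄} = -{Q, z̄}` lies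
in `[-1, kN + N]`. -/

open Finset Pointwise

section

variable {A : Type*} [CommRing A]

lemma C_mul_T_mul_C_mul_T (a b : A) (m n : ℤ) :
    C a * T m * (C b * T n) = C (a * b) * T (m + n) := by
  rw [T_add, map_mul]; ring

lemma wderiv_C_mul_T (a : A) (n : ℤ) : wderiv (C a * T n) = C (n • a) * T (n - 1) := by
  rw [wderiv, ← single_eq_C_mul_T, AddMonoidAlgebra.coeff_single,
    Finsupp.sum_single_index (by simp)]

lemma wderiv_add (f g : A[T;T⁻¹]) : wderiv (f + g) = wderiv f + wderiv g :=
  Finsupp.sum_add_index' (fun _ => by simp) fun _ _ _ => by rw [smul_add, map_add, add_mul]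

section Additive

variable {F : Type*} [FunLike F A A] [AddMonoidHomClass F A A]

lemma dmap_C_mul_T (d : F) (a : A) (n : ℤ) : dmap d (C a * T n) = C (d a) * T n := by
  rw [dmap, ← single_eq_C_mul_T, AddMonoidAlgebra.coeff_single,
    Finsupp.sum_single_index (by simp)]

lemma dmap_add (d : F) (f g : A[T;T⁻¹]) : dmap d (f + g) = dmap d f + dmap d g :=
  Finsupp.sum_add_index' (fun _ => by simp) fun _ _ _ => by rw [map_add, map_add, add_mul]

lemma lax_add_left (d : F) (f g h : A[T;T⁻¹]) : lax d (f + g) h = lax d f h + lax d g h := by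
  rw [lax, lax, lax, wderiv_add, dmap_add]; ring

end Additive

lemma leibniz_of_C_mul_T {φ : A[T;T⁻¹] → A[T;T⁻¹]} (hadd : ∀ f g, φ (f + g) = φ f + φ g)
    (hmon : ∀ (a b : A) (m n : ℤ),
      φ (C a * T m * (C b * T n)) = φ (C a * T m) * (C b * T n) + C a * T m * φ (C b * T n))
    (f g : A[T;T⁻¹]) : φ (f * g) = φ f * g + f * φ g := by
  induction f using LaurentPolynomial.induction_on' with
  | add p q hp hq => rw [add_mul, hadd, hadd, hp, hq]; ring
  | C_mul_T m a =>
    induction g using LaurentPolynomial.induction_on' with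
    | add p q hp hq => rw [mul_add, hadd, hadd, hp, hq]; ring
    | C_mul_T n b => exact hmon a b m n

lemma dmap_mul (D : Derivation ℤ A A) (f g : A[T;T⁻¹]) :
    dmap D (f * g) = dmap D f * g + f * dmap D g := by
  refine leibniz_of_C_mul_T (dmap_add D) (fun a b m n => ?_) f g
  rw [C_mul_T_mul_C_mul_T, dmap_C_mul_T, dmap_C_mul_T, dmap_C_mul_T, D.leibniz]
  simp only [smul_eq_mul, map_add, map_mul, T_add]
  ring

lemma wderiv_mul (f g : A[T;T⁻¹]) : wderiv (f * g) = wderiv f * g + f * wderiv g := by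
  refine leibniz_of_C_mul_T wderiv_add (fun a b m n => ?_) f g
  rw [C_mul_T_mul_C_mul_T, wderiv_C_mul_T, wderiv_C_mul_T, wderiv_C_mul_T]
  simp only [zsmul_eq_mul, map_mul, Int.cast_add, map_add, map_intCast, T_sub, T_add]
  ring

lemma lax_self (d : A → A) (f : A[T;T⁻¹]) : lax d f f = 0 := by
  rw [lax]; ring

lemma lax_mul_left (D : Derivation ℤ A A) (f g h : A[T;T⁻¹]) :
    lax D (f * g) h = f * lax D g h + g * lax D f h := by
  rw [lax, lax, lax, wderiv_mul, dmap_mul]; ring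

lemma lax_pow_left_self (D : Derivation ℤ A A) (f : A[T;T⁻¹]) (k : ℕ) : lax D (f ^ k) f = 0 := by
  induction k with
  | zero =>
    -- the Leibniz rule for `1 * 1` reads `x = x + x`
    have h := lax_mul_left D 1 1 f
    rwa [mul_one, one_mul, left_eq_add, ← pow_zero f] at h
  | succ k ih => rw [pow_succ, lax_mul_left, ih, lax_self]; ring

lemma support_sum_C_mul_T_subset (f : A[T;T⁻¹]) (c : ℤ → A → A) :
    (f.coeff.sum fun n a => C (c n a) * T n).coeff.support ⊆ f.coeff.support := by
  classical
  rw [AddMonoidAlgebra.coeff_finsuppSum]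
  refine Finsupp.support_sum.trans (biUnion_subset.mpr fun n hn => ?_)
  rw [← single_eq_C_mul_T, AddMonoidAlgebra.coeff_single]
  exact Finsupp.support_single_subset.trans (singleton_subset_iff.mpr hn)

lemma support_dmap_subset (d : A → A) (f : A[T;T⁻¹]) :
    (dmap d f).coeff.support ⊆ f.coeff.support :=
  support_sum_C_mul_T_subset f fun _ => d

lemma T_one_mul_wderiv (f : A[T;T⁻¹]) :
    T 1 * wderiv f = f.coeff.sum fun n a => C (n • a) * T n := by
  rw [wderiv, Finsupp.mul_sum]
  refine Finsupp.sum_congr fun n _ => ?_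
  rw [mul_left_comm, ← T_add, add_sub_cancel]

lemma support_lax_subset (d : A → A) (f g : A[T;T⁻¹]) :
    (lax d f g).coeff.support ⊆ f.coeff.support + g.coeff.support := by
  classical
  have hlax : lax d f g = T 1 * wderiv f * dmap d g - dmap d f * (T 1 * wderiv g) := by
    rw [lax]; ring
  have hw (h : A[T;T⁻¹]) : (T 1 * wderiv h).coeff.support ⊆ h.coeff.support := by
    rw [T_one_mul_wderiv]; exact support_sum_C_mul_T_subset h _
  rw [hlax, AddMonoidAlgebra.coeff_sub]
  refine Finsupp.support_sub.trans (union_subset ?_ ?_)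
  · exact (AddMonoidAlgebra.support_coeff_mul_subset _ _).trans
      (add_subset_add (hw f) (support_dmap_subset d g))
  · exact (AddMonoidAlgebra.support_coeff_mul_subset _ _).trans
      (add_subset_add (support_dmap_subset d f) (hw g))

lemma support_lax_subset_Icc (d : A → A) {f g : A[T;T⁻¹]} {a b c e : ℤ}
    (hf : f.coeff.support ⊆ Icc a b) (hg : g.coeff.support ⊆ Icc c e) :
    (lax d f g).coeff.support ⊆ Icc (a + c) (b + e) :=
  (support_lax_subset d f g).trans ((add_subset_add hf hg).trans (Icc_add_Icc_subset _ _ _ _))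

lemma support_pow_subset_Icc {f : A[T;T⁻¹]} {a b : ℤ} (hf : f.coeff.support ⊆ Icc a b) (k : ℕ) :
    (f ^ k).coeff.support ⊆ Icc (k * a) (k * b) := by
  classical
  induction k with
  | zero => simpa using support_C_mul_T (1 : A) 0
  | succ k ih =>
    rw [pow_succ]
    refine (AddMonoidAlgebra.support_coeff_mul_subset _ _).trans
      ((add_subset_add ih hf).trans ((Icc_add_Icc_subset _ _ _ _).trans_eq ?_))
    congr 1 <;> push_cast <;> ring

lemma coeff_negPart (f : A[T;T⁻¹]) (m : ℤ) :
    (_root_.negPart f).coeff m = if m < 0 then f.coeff m else 0 := by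
  classical
  rw [_root_.negPart, AddMonoidAlgebra.coeff_finsuppSum, Finsupp.sum_apply]
  simp only [apply_ite AddMonoidAlgebra.coeff, ← single_eq_C_mul_T, AddMonoidAlgebra.coeff_single,
    AddMonoidAlgebra.coeff_zero, apply_ite (fun x : ℤ →₀ A => x m), Finsupp.single_apply,
    Finsupp.zero_apply]
  rw [Finsupp.sum, sum_eq_single m (fun n _ hn => by simp [hn])
    (fun hm => by simp [Finsupp.notMem_support_iff.mp hm])]
  simp only [if_true]

lemma support_negPart_add_C_subset {f : A[T;T⁻¹]} {a b : ℤ} (hf : f.coeff.support ⊆ Icc a b)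
    (ha : a ≤ 0) (c : A) : (_root_.negPart f + C c).coeff.support ⊆ Icc a 0 := by
  intro n hn
  have hfn : f.coeff n ≠ 0 → a ≤ n := fun h => (mem_Icc.mp (hf (Finsupp.mem_support_iff.mpr h))).1
  rw [Finsupp.mem_support_iff, AddMonoidAlgebra.coeff_add, Finsupp.add_apply, coeff_negPart,
    C_apply] at hn
  rw [mem_Icc]
  split_ifs at hn with hneg hzero
  · omega
  · exact ⟨hfn (by simpa using hn), hneg.le⟩
  · omega
  · simp at hn

lemma support_sub_negPart_add_C_subset {f : A[T;T⁻¹]} {a b : ℤ} (hf : f.coeff.support ⊆ Icc a b)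
    (hb : 0 ≤ b) (c : A) : (f - (_root_.negPart f + C c)).coeff.support ⊆ Icc 0 b := by
  intro n hn
  have hfn : f.coeff n ≠ 0 → n ≤ b := fun h => (mem_Icc.mp (hf (Finsupp.mem_support_iff.mpr h))).2
  rw [Finsupp.mem_support_iff, AddMonoidAlgebra.coeff_sub, AddMonoidAlgebra.coeff_add,
    Finsupp.sub_apply, Finsupp.add_apply, coeff_negPart, C_apply] at hn
  rw [mem_Icc]
  split_ifs at hn with hneg hzero
  · omega
  · simp at hn
  · omega
  · exact ⟨not_lt.mp hneg, hfn (by simpa using hn)⟩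

end

theorem tbar_flow_preserves_poly_reduction_of_zbar_general {A : Type*} [CommRing A] [Algebra ℚ A]
    (d : A → A)
    (hd_add : ∀ a b : A, d (a + b) = d a + d b)
    (hd_mul : ∀ a b : A, d (a * b) = a * d b + d a * b)
    (N k : ℕ)
    (zbar : LaurentPolynomial A)
    (hzbar : zbar.coeff.support ⊆ Finset.Icc (-1 : ℤ) (N : ℤ))
    (Hbk : LaurentPolynomial A)
    (hHbk : Hbk = negPart (zbar ^ k) + C ((1/2 : ℚ) • ((zbar ^ k).coeff (0 : ℤ)))) :
    (lax d Hbk zbar).coeff.support ⊆ Finset.Icc (-1 : ℤ) (N : ℤ) := by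
  let D : Derivation ℤ A A := Derivation.mk' (AddMonoidHom.mk' d hd_add).toIntLinearMap
    fun a b => by simp [hd_mul, mul_comm]
  have hpow : (zbar ^ k).coeff.support ⊆ Icc (-k) (k * N) := by
    simpa using support_pow_subset_Icc hzbar k
  have hH : Hbk.coeff.support ⊆ Icc (-k) 0 :=
    hHbk ▸ support_negPart_add_C_subset hpow (by simp) _
  have hQ : (zbar ^ k - Hbk).coeff.support ⊆ Icc 0 (k * N) :=
    hHbk ▸ support_sub_negPart_add_C_subset hpow (by positivity) _
  have hlax : lax d Hbk zbar = -lax d (zbar ^ k - Hbk) zbar := by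
    have h := lax_add_left D Hbk (zbar ^ k - Hbk) zbar
    rw [add_sub_cancel, lax_pow_left_self] at h
    exact eq_neg_of_add_eq_zero_left h.symm
  have hupper := support_lax_subset_Icc d hH hzbar
  have hlower : (lax d Hbk zbar).coeff.support ⊆ Icc (0 + -1) (k * N + N) := by
    rw [hlax, AddMonoidAlgebra.coeff_neg, Finsupp.support_neg]
    exact support_lax_subset_Icc d hQ hzbar
  intro n hn
  have h1 := mem_Icc.mp (hupper hn)
  have h2 := mem_Icc.mp (hlower hn)
  exact mem_Icc.mpr ⟨by linarith, by linarith⟩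

/-- the `t̄_k`-flows preserve the polynomial reduction of `z̄`:
if `z̄` has support in `{−1,…,N}` and `H̄_k = (z̄^k)₋ + (1/2)(z̄^k)₀` then
`{H̄_k, z̄}` has support in `{−1,…,N}`. -/
theorem tbar_flow_preserves_poly_reduction_of_zbar {A : Type*} [CommRing A] [Algebra ℚ A]
    (d : A → A)
    (hd_add : ∀ a b : A, d (a + b) = d a + d b)
    (hd_mul : ∀ a b : A, d (a * b) = a * d b + d a * b)
    (N k : ℕ) (hN : 1 ≤ N) (hk : 1 ≤ k)
    (zbar : LaurentPolynomial A)
    (hzbar : zbar.coeff.support ⊆ Finset.Icc (-1 : ℤ) (N : ℤ))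
    (Hbk : LaurentPolynomial A)
    (hHbk : Hbk = negPart (zbar ^ k) + C ((1/2 : ℚ) • ((zbar ^ k).coeff (0 : ℤ)))) :
    (lax d Hbk zbar).coeff.support ⊆ Finset.Icc (-1 : ℤ) (N : ℤ) :=
  tbar_flow_preserves_poly_reduction_of_zbar_general d hd_add hd_mul N k zbar hzbar Hbk hHbk
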